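/- arXiv:0907.5287 — 8 statements merged into one kernel-verified Lean document; each statement's English description precedes it below -/
import Mathlib

section
/- Let φ: Z_{2k} → Z_2^m be a Gray map such that the operation φ(i)·φ(j) = φ(i+j) makes φ(Z_{2k}) a Hamming-compatible code. Then φ is distance-preserving: d(φ(i), φ(j)) = d_L(i, j) for all i, j ∈ Z_{2k}, where d_L is the Lee distance. -/
/-- Lee weight on `ZMod (2*k)`: the minimum absolute value of a representative. -/
def leeWt {k : ℕ} (x : ZMod (2 * k)) : ℕ := min x.val (2 * k - x.val)

section aux
variable {m : ℕ}

lemma hd_card (x y : Fin m → ZMod 2) :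
    hammingDist x y = (Finset.univ.filter fun i => x i ≠ y i).card := rfl

lemma zmod2_trans {a b c : ZMod 2} (h1 : a ≠ b) (h2 : b ≠ c) : a = c := by
  revert h1 h2; revert a b c; decide

lemma flip_exists {x y : Fin m → ZMod 2} (h : hammingDist x y = 1) :
    ∃ q, ∀ i, x i ≠ y i ↔ i = q := by
  rw [hd_card, Finset.card_eq_one] at h
  obtain ⟨q, hq⟩ := h
  refine ⟨q, fun i => ?_⟩
  constructor
  · intro hi
    have : i ∈ Finset.univ.filter fun i => x i ≠ y i := by simp [hi]
    rw [hq] at this; simpa using this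
  · intro hi; subst hi
    have : i ∈ Finset.univ.filter fun j => x j ≠ y j := by
      rw [hq]; exact Finset.mem_singleton.2 rfl
    simpa using this

lemma dist_flip_ne {x y y' : Fin m → ZMod 2} {q} (hy : ∀ i, y i ≠ y' i ↔ i = q)
    (hq : x q ≠ y q) : hammingDist x y' + 1 = hammingDist x y := by
  have hyq : y q ≠ y' q := (hy q).2 rfl
  have hy' : ∀ i, i ≠ q → y' i = y i := fun i hi => by
    by_contra h; exact hi ((hy i).1 (Ne.symm h))
  have hxq : x q = y' q := zmod2_trans hq hyq
  rw [hd_card, hd_card]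
  have hset : (Finset.univ.filter fun i => x i ≠ y i) =
      insert q (Finset.univ.filter fun i => x i ≠ y' i) := by
    ext i
    simp only [Finset.mem_insert, Finset.mem_filter, Finset.mem_univ, true_and]
    by_cases hi : i = q
    · subst hi; simp [hq]
    · rw [hy' i hi]; tauto
  rw [hset, Finset.card_insert_of_notMem (by simp [hxq])]

lemma dist_flip_eq {x y y' : Fin m → ZMod 2} {q} (hy : ∀ i, y i ≠ y' i ↔ i = q)
    (hq : x q = y q) : hammingDist x y' = hammingDist x y + 1 := by
  have hyq : y q ≠ y' q := (hy q).2 rfl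
  have hy' : ∀ i, i ≠ q → y' i = y i := fun i hi => by
    by_contra h; exact hi ((hy i).1 (Ne.symm h))
  have hxq : x q ≠ y' q := by rw [hq]; exact hyq
  rw [hd_card, hd_card]
  have hset : (Finset.univ.filter fun i => x i ≠ y' i) =
      insert q (Finset.univ.filter fun i => x i ≠ y i) := by
    ext i
    simp only [Finset.mem_insert, Finset.mem_filter, Finset.mem_univ, true_and]
    by_cases hi : i = q
    · subst hi; simp [hxq]
    · rw [hy' i hi]; tauto
  rw [hset, Finset.card_insert_of_notMem (by simp [hq])]

/-- Four-point lemma: the two flipped bits coincide. -/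
lemma flip_eq {A B C D : Fin m → ZMod 2} {q p : Fin m}
    (hAB : ∀ i, A i ≠ B i ↔ i = q) (hCD : ∀ i, C i ≠ D i ↔ i = p) {n : ℕ}
    (hAC : hammingDist A C = n) (hBC : hammingDist B C = n - 1)
    (hAD : hammingDist A D = n - 1) (hBD : hammingDist B D = n) (hn : 1 ≤ n) :
    p = q := by
  have hAq : C q ≠ A q := by
    by_contra h
    have := dist_flip_eq (x := C) hAB h
    rw [hammingDist_comm C B, hBC, hammingDist_comm C A, hAC] at this
    omega
  have hCp : A p ≠ C p := by
    by_contra h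
    have := dist_flip_eq (x := A) hCD h
    rw [hAC, hAD] at this
    omega
  by_contra hpq
  have hBp : B p ≠ C p := by
    have hBA : B p = A p := by
      by_contra h
      exact hpq ((hAB p).1 (Ne.symm h))
    rw [hBA]; exact hCp
  have := dist_flip_ne (x := B) hCD hBp
  rw [hBD, hBC] at this
  omega

lemma flip_sum {A B C D : Fin m → ZMod 2} {q : Fin m}
    (hAB : ∀ i, A i ≠ B i ↔ i = q) (hCD : ∀ i, C i ≠ D i ↔ i = q) :
    ∀ i, A i + B i = C i + D i := by
  intro i
  by_cases hi : i = q
  · subst hi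
    have h1 : A i ≠ B i := (hAB i).2 rfl
    have h2 : C i ≠ D i := (hCD i).2 rfl
    revert h1 h2
    generalize A i = a; generalize B i = b; generalize C i = c; generalize D i = d
    revert a b c d; decide
  · have h1 : A i = B i := by by_contra h; exact hi ((hAB i).1 h)
    have h2 : C i = D i := by by_contra h; exact hi ((hCD i).1 h)
    rw [h1, h2]
    generalize B i = b; generalize D i = d
    revert b d; decide

end aux

theorem gray_distance_preserving (k m : ℕ) (hk : 0 < k)
    (φ : ZMod (2 * k) → Fin m → ZMod 2)
    (hinj : Function.Injective φ)
    (hgray : ∀ i : ZMod (2 * k), hammingDist (φ i) (φ (i + 1)) = 1)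
    (hHC : ∀ a b : ZMod (2 * k), hammingDist (φ a) (φ (a + b)) = hammingNorm (φ b)) :
    ∀ i j : ZMod (2 * k), hammingDist (φ i) (φ j) = leeWt (i - j) := by
  haveI : NeZero (2 * k) := ⟨by omega⟩
  have dist_eq : ∀ a b : ZMod (2 * k), hammingDist (φ a) (φ b) = hammingNorm (φ (b - a)) := by
    intro a b
    have := hHC a (b - a)
    rwa [add_sub_cancel] at this
  -- main lemma : norm of φ n = n for n ≤ k
  have main : ∀ n : ℕ, n ≤ k → hammingNorm (φ (n : ZMod (2 * k))) = n := by
    intro n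
    induction n using Nat.strong_induction_on with
    | _ n IH =>
      match n with
      | 0 =>
        intro _
        have := dist_eq 0 0
        simp only [sub_self] at this
        rw [Nat.cast_zero, ← this, hammingDist_self]
      | 1 =>
        intro _
        have h := dist_eq 0 1
        rw [sub_zero] at h
        have hg := hgray 0
        rw [zero_add] at hg
        rw [Nat.cast_one, ← h, hg]
      | (n+2) =>
        intro hle
        have hIN : hammingNorm (φ ((n + 1 : ℕ) : ZMod (2 * k))) = n + 1 :=
          IH (n + 1) (by omega) (by omega)
        have hIN1 : hammingNorm (φ ((n : ℕ) : ZMod (2 * k))) = n := IH n (by omega) (by omega)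
        have hstep : hammingDist (φ ((n + 1 : ℕ) : ZMod (2 * k)))
            (φ (((n + 1 : ℕ) : ZMod (2 * k)) + 1)) = 1 := hgray _
        have hcast : (((n + 1 : ℕ) : ZMod (2 * k)) + 1) = ((n + 2 : ℕ) : ZMod (2 * k)) := by
          push_cast; ring
        have hd0N : hammingDist (φ 0) (φ ((n + 1 : ℕ) : ZMod (2 * k))) = n + 1 := by
          rw [dist_eq, sub_zero, hIN]
        have hnorm2 : hammingNorm (φ ((n + 2 : ℕ) : ZMod (2 * k))) =
            hammingDist (φ 0) (φ (((n + 1 : ℕ) : ZMod (2 * k)) + 1)) := by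
          rw [dist_eq, sub_zero, hcast]
        obtain ⟨q, hq⟩ := flip_exists hstep
        by_cases hb : φ 0 q = φ ((n + 1 : ℕ) : ZMod (2 * k)) q
        · rw [hnorm2, dist_flip_eq (x := φ 0) hq hb, hd0N]
        · -- bad case: the norm drops to n; derive a contradiction
          exfalso
          have hdrop : hammingDist (φ 0) (φ (((n + 1 : ℕ) : ZMod (2 * k)) + 1)) = n := by
            have := dist_flip_ne (x := φ 0) hq hb
            omega
          have hnormN2 : hammingNorm (φ ((n + 2 : ℕ) : ZMod (2 * k))) = n := by
            rw [hnorm2, hdrop]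
          set N : ZMod (2 * k) := ((n + 1 : ℕ) : ZMod (2 * k)) with hNdef
          -- the flipped bit is the same at every position
          have key : ∀ a : ZMod (2 * k), ∀ i,
              φ a i + φ (a + 1) i = φ (a + N) i + φ (a + N + 1) i := by
            intro a
            obtain ⟨qa, hqa⟩ := flip_exists (hgray a)
            obtain ⟨pa, hpa⟩ := flip_exists (hgray (a + N))
            have hAC : hammingDist (φ a) (φ (a + N)) = n + 1 := by
              rw [dist_eq, add_sub_cancel_left]; exact hIN
            have hBC : hammingDist (φ (a + 1)) (φ (a + N)) = n := by
              rw [dist_eq]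
              have : a + N - (a + 1) = ((n : ℕ) : ZMod (2 * k)) := by
                rw [hNdef]; push_cast; ring
              rw [this]; exact hIN1
            have hAD : hammingDist (φ a) (φ (a + N + 1)) = n := by
              rw [dist_eq]
              have : a + N + 1 - a = ((n + 2 : ℕ) : ZMod (2 * k)) := by
                rw [hNdef]; push_cast; ring
              rw [this]; exact hnormN2
            have hBD : hammingDist (φ (a + 1)) (φ (a + N + 1)) = n + 1 := by
              rw [dist_eq]
              have : a + N + 1 - (a + 1) = ((n + 1 : ℕ) : ZMod (2 * k)) := by
                rw [hNdef]; push_cast; ring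
              rw [this, ← hNdef]; exact hIN
            have hpq : pa = qa := by
              refine flip_eq hqa hpa (n := n + 1) hAC (by omega) (by omega) hBD (by omega)
            rw [hpq] at hpa
            exact flip_sum hqa hpa
          -- constancy of a ↦ φ a + φ (a + N)
          have const : ∀ j : ℕ, ∀ i,
              φ ((j : ℕ) : ZMod (2 * k)) i + φ (((j : ℕ) : ZMod (2 * k)) + N) i =
              φ 0 i + φ N i := by
            intro j
            induction j with
            | zero => intro i; rw [Nat.cast_zero, zero_add]
            | succ j hj =>
              intro i
              have h1 := hj i
              have h2 := key ((j : ℕ) : ZMod (2 * k)) i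
              have hc1 : (((j + 1 : ℕ)) : ZMod (2 * k)) = ((j : ℕ) : ZMod (2 * k)) + 1 := by
                push_cast; ring
              have hc2 : ((j : ℕ) : ZMod (2 * k)) + 1 + N =
                  ((j : ℕ) : ZMod (2 * k)) + N + 1 := by ring
              rw [hc1, hc2]
              revert h1 h2
              generalize φ ((j : ℕ) : ZMod (2 * k)) i = a
              generalize φ (((j : ℕ) : ZMod (2 * k)) + 1) i = a'
              generalize φ (((j : ℕ) : ZMod (2 * k)) + N) i = b
              generalize φ (((j : ℕ) : ZMod (2 * k)) + N + 1) i = b'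
              generalize φ 0 i + φ N i = c
              revert a a' b b' c; decide
          -- conclude φ (2 N) = φ 0
          have h2N : φ (N + N) = φ 0 := by
            funext i
            have := const (n + 1) i
            rw [← hNdef] at this
            revert this
            generalize φ (N + N) i = x
            generalize φ 0 i = y
            generalize φ N i = z
            revert x y z; decide
          have hNN : N + N = 0 := hinj h2N
          have : ((2 * (n + 1) : ℕ) : ZMod (2 * k)) = 0 := by
            have hc : ((2 * (n + 1) : ℕ) : ZMod (2 * k)) = N + N := by
              rw [hNdef]; push_cast; ring
            rw [hc, hNN]
          rw [ZMod.natCast_eq_zero_iff] at this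
          have := Nat.le_of_dvd (by omega) this
          omega
  -- norms equal Lee weights
  have norm_all : ∀ b : ZMod (2 * k), hammingNorm (φ b) = leeWt b := by
    intro b
    have hvlt : b.val < 2 * k := ZMod.val_lt b
    have hb : ((b.val : ℕ) : ZMod (2 * k)) = b := ZMod.natCast_rightInverse b
    by_cases hv : b.val ≤ k
    · have h1 := main b.val hv
      rw [hb] at h1
      rw [h1]; unfold leeWt; omega
    · have h0 : ((2 * k - b.val : ℕ) : ZMod (2 * k)) + ((b.val : ℕ) : ZMod (2 * k)) = 0 := by
        rw [← Nat.cast_add, Nat.sub_add_cancel (le_of_lt hvlt), ZMod.natCast_self]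
      have hsum : ((2 * k - b.val : ℕ) : ZMod (2 * k)) + b = 0 := by rwa [hb] at h0
      have hneg : -b = ((2 * k - b.val : ℕ) : ZMod (2 * k)) :=
        (eq_neg_of_add_eq_zero_left hsum).symm
      have e1 : hammingNorm (φ b) = hammingDist (φ 0) (φ b) := by rw [dist_eq, sub_zero]
      have e2 : hammingDist (φ b) (φ 0) = hammingNorm (φ (-b)) := by rw [dist_eq, zero_sub]
      rw [e1, hammingDist_comm, e2, hneg, main _ (by omega)]
      unfold leeWt; omega
  intro i j
  rw [hammingDist_comm, dist_eq j i, norm_all]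
end

section
/- Define φ: Z_{2k} → Z_2^k by φ(i) = (0^{(k−i)} | 1^{(i)}) for 0 ≤ i ≤ k−1 and φ(i+k) = φ(i) + 1^{(k)}. Then φ is weight-preserving and distance-preserving: wt(φ(i)) = w_L(i) and d(φ(i), φ(j)) = d_L(i, j) for all i, j ∈ Z_{2k}. -/
/-!
Bit `t` of `φ(i)` is the parity of `⌊(n + t) / k⌋` for every natural representative `n` of `i`.
Hence `φ(i + 1)` is `φ(i)` rotated by one position with the last bit flipped; both operations
preserve Hamming distances, so `d(φ(i), φ(j)) = d(φ(i - j), φ(0)) = wt(φ(i - j))`, and the weight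
is a direct count of the ones of `0^(k-i) | 1^(i)` or of its complement.
-/

/-- The standard Gray map `ZMod (2*k) → ZMod 2 ^ k`:
`φ(i) = 0^(k-i) | 1^(i)` for `0 ≤ i ≤ k-1`, and `φ(i+k) = φ(i) + 1^(k)`. -/
def gray (k : ℕ) (i : ZMod (2 * k)) : Fin k → ZMod 2 :=
  fun j => if i.val < k then (if k ≤ j.val + i.val then 1 else 0)
           else (if k ≤ j.val + (i.val - k) then 0 else 1)

section Hamming

variable {ι ι' β : Type*} [Fintype ι] [Fintype ι'] [DecidableEq β]

theorem hammingDist_comp_equiv (σ : ι' ≃ ι) (x y : ι → β) :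
    hammingDist (x ∘ σ) (y ∘ σ) = hammingDist x y :=
  Finset.card_equiv σ (by simp)

theorem hammingDist_add_right_eq [Add β] [IsRightCancelAdd β] (x y z : ι → β) :
    hammingDist (x + z) (y + z) = hammingDist x y :=
  hammingDist_comp (fun i b => b + z i) fun i => add_left_injective (z i)

end Hamming

def grayNat (k n : ℕ) : Fin k → ZMod 2 := fun t => ((n + t) / k : ℕ)

section GrayNat

variable {k : ℕ}

theorem grayNat_mod (n : ℕ) : grayNat k (n % (2 * k)) = grayNat k n := by
  funext t
  simp only [grayNat, ZMod.natCast_eq_natCast_iff']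
  rw [← Nat.mod_mul_right_div_self, ← Nat.mod_mul_right_div_self, mul_comm k 2, Nat.mod_add_mod]

theorem grayNat_zero : grayNat k 0 = 0 := by
  funext t
  simp [grayNat, Nat.div_eq_of_lt t.isLt]

theorem grayNat_apply {n : ℕ} (hn : n < 2 * k) (t : Fin k) :
    grayNat k n t = if k ≤ n + t ∧ n + t < 2 * k then 1 else 0 := by
  have ht := t.isLt
  simp only [grayNat]
  split_ifs with h
  · rw [Nat.div_eq_of_lt_le (k := 1) (by omega) (by omega), Nat.cast_one]
  · rcases lt_or_ge (n + t) k with hlt | hge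
    · rw [Nat.div_eq_of_lt hlt, Nat.cast_zero]
    · rw [Nat.div_eq_of_lt_le (k := 2) (by omega) (by omega)]
      rfl

theorem grayNat_succ [NeZero k] (n : ℕ) :
    grayNat k (n + 1) =
      grayNat k n ∘ Equiv.addRight (1 : Fin k) +
        fun t : Fin k => if (t : ℕ) + 1 = k then 1 else 0 := by
  funext t
  have ht := t.isLt
  simp only [grayNat, Pi.add_apply, Function.comp_apply, Equiv.coe_addRight, Fin.val_add,
    Fin.val_one', Nat.add_mod_mod]
  split_ifs with hlast
  · -- rotating the last position wraps around and crosses a multiple of `k`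
    rw [hlast, Nat.mod_self, add_zero, show n + 1 + t = n + k by omega,
      Nat.add_div_right _ (NeZero.pos k)]
    push_cast
    ring
  · rw [Nat.mod_eq_of_lt (by omega), add_zero, add_right_comm, add_assoc]

theorem hammingDist_grayNat_add_right [NeZero k] (a b m : ℕ) :
    hammingDist (grayNat k (a + m)) (grayNat k (b + m)) =
      hammingDist (grayNat k a) (grayNat k b) := by
  induction m with
  | zero => rfl
  | succ m ih =>
    rw [← add_assoc, ← add_assoc, grayNat_succ, grayNat_succ, hammingDist_add_right_eq,
      hammingDist_comp_equiv, ih]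

open Finset in
theorem hammingNorm_grayNat {n : ℕ} (hn : n < 2 * k) :
    hammingNorm (grayNat k n) = min n (2 * k - n) := by
  have hsupport : hammingNorm (grayNat k n) =
      #(univ.filter (fun t : Fin k => t < 2 * k - n) \
        univ.filter (fun t : Fin k => t < k - n)) := by
    rw [hammingNorm]
    congr 1
    ext t
    simp only [grayNat_apply hn, mem_sdiff, mem_filter, mem_univ, true_and, ne_eq,
      ite_eq_right_iff, one_ne_zero, imp_false]
    omega
  rw [hsupport, card_sdiff_of_subset (by intro t; simp only [mem_filter, mem_univ, true_and]; omega), Fin.card_filter_val_lt,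
    Fin.card_filter_val_lt]
  omega

end GrayNat

section Gray

variable {k : ℕ} [NeZero k]

theorem gray_eq_grayNat (i : ZMod (2 * k)) : gray k i = grayNat k i.val := by
  funext t
  have hi := ZMod.val_lt i
  rw [grayNat_apply hi, gray]
  split_ifs <;> first | rfl | omega

theorem gray_natCast (n : ℕ) : gray k n = grayNat k n := by
  rw [gray_eq_grayNat, ZMod.val_natCast, grayNat_mod]

theorem hammingNorm_gray (i : ZMod (2 * k)) : hammingNorm (gray k i) = leeWt i := by
  rw [gray_eq_grayNat]
  exact hammingNorm_grayNat (ZMod.val_lt i)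

theorem hammingDist_gray (i j : ZMod (2 * k)) :
    hammingDist (gray k i) (gray k j) = leeWt (i - j) := by
  have hi : i = (((i - j).val + j.val : ℕ) : ZMod (2 * k)) := by simp
  calc hammingDist (gray k i) (gray k j)
      = hammingDist (grayNat k ((i - j).val + j.val)) (grayNat k (0 + j.val)) := by
        rw [zero_add, ← gray_natCast, ← gray_natCast, ← hi, ZMod.natCast_zmod_val]
    _ = hammingDist (grayNat k (i - j).val) (grayNat k 0) := hammingDist_grayNat_add_right ..
    _ = leeWt (i - j) := by
        rw [grayNat_zero, hammingDist_zero_right, ← gray_eq_grayNat, hammingNorm_gray]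

end Gray

theorem gray_weight_and_distance_preserving (k : ℕ) (hk : 0 < k) :
    (∀ i : ZMod (2 * k), hammingNorm (gray k i) = leeWt i) ∧
    (∀ i j : ZMod (2 * k), hammingDist (gray k i) (gray k j) = leeWt (i - j)) := by
  have : NeZero k := ⟨hk.ne'⟩
  exact ⟨hammingNorm_gray, hammingDist_gray⟩
end

section
/- Let φ: Z_{2k} → Z_2^k be defined by φ(i) = (0^{(k−i)} | 1^{(i)}) for 0 ≤ i ≤ k−1 and φ(i+k) = φ(i) + 1^{(k)}, and let σ_j = (1, k, k−1, …, 2)^j be the cyclic permutation consisting of j left shifts of the k coordinates. Then for all i ∈ Z_{2k}, φ(i) = φ(1)^i under the product φ(a)·φ(b) = φ(a) + σ_a(φ(b)). -/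
/-- `σ_a`: the `a`-fold left cyclic shift of coordinates on `ZMod 2 ^ k`. -/
def shiftA (k : ℕ) (hk : 0 < k) (a : ℕ) (v : Fin k → ZMod 2) : Fin k → ZMod 2 :=
  fun j => v ⟨(j.val + a) % k, Nat.mod_lt _ hk⟩

lemma gray_cond (k : ℕ) (hk : 0 < k) (n : ℕ) (hn : n < 2 * k) (j : Fin k) :
    gray k (n : ZMod (2 * k)) j =
      if k ≤ j.val + n ∧ j.val + n < 2 * k then 1 else 0 := by
  haveI : NeZero (2 * k) := ⟨by omega⟩
  have hval : ((n : ZMod (2 * k)).val) = n := ZMod.val_natCast_of_lt hn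
  have hj := j.isLt
  unfold gray
  rw [hval]
  split_ifs <;> first | rfl | (exfalso; omega)

theorem gray_eq_pow_of_one (k : ℕ) (hk : 0 < k) :
    ∀ i : ZMod (2 * k),
      gray k i =
        (fun v => gray k 1 + shiftA k hk (1 : ZMod (2 * k)).val v)^[i.val] 0 := by
  haveI : NeZero (2 * k) := ⟨by omega⟩
  have hone : (1 : ZMod (2 * k)).val = 1 := by
    rw [ZMod.val_one_eq_one_mod, Nat.mod_eq_of_lt (by omega)]
  have key : ∀ n : ℕ, n < 2 * k →
      (fun v => gray k 1 + shiftA k hk (1 : ZMod (2 * k)).val v)^[n] 0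
        = gray k (n : ZMod (2 * k)) := by
    intro n
    induction n with
    | zero =>
      intro _
      funext j
      rw [gray_cond k hk 0 (by omega) j]
      have hj := j.isLt
      simp only [Function.iterate_zero, id_eq, Pi.zero_apply]
      rw [if_neg (by omega)]
    | succ n ih =>
      intro hn
      rw [Function.iterate_succ_apply', ih (by omega)]
      funext j
      have hj := j.isLt
      simp only [Pi.add_apply, shiftA, hone]
      have h1 : gray k (1 : ZMod (2 * k)) j
          = if k ≤ j.val + 1 ∧ j.val + 1 < 2 * k then 1 else 0 := by
        have := gray_cond k hk 1 (by omega) j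
        simpa using this
      rw [h1, gray_cond k hk n (by omega), gray_cond k hk (n + 1) hn]
      push_cast
      rcases Nat.lt_or_ge (j.val + 1) k with hlt | hge
      · simp only [Nat.mod_eq_of_lt hlt]
        split_ifs <;> first | rfl | decide | (exfalso; omega) | omega
      · have heq : j.val + 1 = k := by omega
        simp only [heq, Nat.mod_self]
        split_ifs <;> first | rfl | decide | (exfalso; omega) | omega
  intro i
  have hi : i.val < 2 * k := ZMod.val_lt i
  rw [key i.val hi, ZMod.natCast_val, ZMod.cast_id]
end

section
/- Let φ: Z_{2k} → Z_2^k be defined by φ(i) = (0^{(k−i)} | 1^{(i)}) for 0 ≤ i ≤ k−1 and φ(i+k) = φ(i) + 1^{(k)}, with product φ(a)·φ(b) = φ(a) + σ_a(φ(b)), where σ_a is a left cyclic shift by a positions. Then (φ(Z_{2k}), ·) is a group with identity 0^{(k)}, and the inverse of φ(i) is φ(2k−i). -/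
lemma mod_char (x n : ℕ) (hn : 0 < n) (h : x < 3 * n) :
    (x < n ∧ x % n = x) ∨ (n ≤ x ∧ x < 2 * n ∧ x % n = x - n) ∨
      (2 * n ≤ x ∧ x % n = x - 2 * n) := by
  rcases Nat.lt_or_ge x n with h1 | h1
  · exact Or.inl ⟨h1, Nat.mod_eq_of_lt h1⟩
  rcases Nat.lt_or_ge x (2 * n) with h2 | h2
  · exact Or.inr (Or.inl ⟨h1, h2, by rw [Nat.mod_eq_sub_mod h1, Nat.mod_eq_of_lt (by omega)]⟩)
  · refine Or.inr (Or.inr ⟨h2, ?_⟩)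
    rw [Nat.mod_eq_sub_mod h1, Nat.mod_eq_sub_mod (by omega), Nat.mod_eq_of_lt (by omega)]
    omega

lemma gray_add (k : ℕ) (hk : 0 < k) (a b : ZMod (2 * k)) :
    gray k (a + b) = gray k a + shiftA k hk a.val (gray k b) := by
  haveI : NeZero (2 * k) := ⟨by omega⟩
  have hA := ZMod.val_lt a
  have hB := ZMod.val_lt b
  have hs : (a + b).val = (a.val + b.val) % (2 * k) := ZMod.val_add a b
  funext j
  have hj := j.isLt
  have h1 := mod_char (a.val + b.val) (2 * k) (by omega) (by omega)
  have h1' := Nat.mod_lt (a.val + b.val) (show 0 < 2*k by omega)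
  have h2 := mod_char (j.val + a.val) k hk (by omega)
  have h2' := Nat.mod_lt (j.val + a.val) hk
  simp only [gray, shiftA, Pi.add_apply, hs]
  split_ifs <;> first | rfl | decide | (exfalso; omega)

lemma gray_injective (k : ℕ) (hk : 0 < k) : Function.Injective (gray k) := by
  haveI : NeZero (2 * k) := ⟨by omega⟩
  intro a b h
  apply ZMod.val_injective
  have hA := ZMod.val_lt a
  have hB := ZMod.val_lt b
  by_contra hv
  have h0 := congrFun h ⟨0, hk⟩
  have h2 := congrFun h ⟨(2 * k - max a.val b.val) % k, Nat.mod_lt _ hk⟩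
  have hc := mod_char (2 * k - max a.val b.val) k hk (by omega)
  simp only [gray] at h0 h2
  split_ifs at h0 h2 <;>
    first
    | exact absurd h0 (by decide)
    | exact absurd h2 (by decide)
    | omega

lemma gray_zero' (k : ℕ) (hk : 0 < k) : gray k (0 : ZMod (2 * k)) = 0 := by
  haveI : NeZero (2 * k) := ⟨by omega⟩
  funext j
  have hj := j.isLt
  simp only [gray, ZMod.val_zero]
  split_ifs <;> first | rfl | (exfalso; omega)

theorem gray_image_group (k : ℕ) (hk : 0 < k) :
    ∃ m : (Fin k → ZMod 2) → (Fin k → ZMod 2) → (Fin k → ZMod 2),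
      (∀ a b : ZMod (2 * k),
        m (gray k a) (gray k b) = gray k a + shiftA k hk a.val (gray k b)) ∧
      (∀ x ∈ Set.range (gray k), ∀ y ∈ Set.range (gray k), ∀ z ∈ Set.range (gray k),
        m (m x y) z = m x (m y z)) ∧
      (gray k (0 : ZMod (2 * k)) = 0) ∧
      (∀ x ∈ Set.range (gray k), m x (gray k 0) = x ∧ m (gray k 0) x = x) ∧
      (∀ i : ZMod (2 * k),
        m (gray k i) (gray k ((2 * k : ZMod (2 * k)) - i)) = gray k 0 ∧
        m (gray k ((2 * k : ZMod (2 * k)) - i)) (gray k i) = gray k 0) := by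
  classical
  refine ⟨fun x y =>
    if h : ∃ a, gray k a = x then gray k h.choose + shiftA k hk (h.choose).val y
    else x + y, ?_, ?_, ?_, ?_, ?_⟩
  · intro a b
    beta_reduce
    rw [dif_pos ⟨a, rfl⟩]
    have hspec := (⟨a, rfl⟩ : ∃ a', gray k a' = gray k a).choose_spec
    rw [gray_injective k hk hspec]
  all_goals
    have hm : ∀ a b : ZMod (2 * k),
        (fun x y => if h : ∃ a, gray k a = x then
            gray k h.choose + shiftA k hk (h.choose).val y else x + y)
          (gray k a) (gray k b) = gray k (a + b) := by
      intro a b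
      beta_reduce
      rw [dif_pos ⟨a, rfl⟩]
      have hspec := (⟨a, rfl⟩ : ∃ a', gray k a' = gray k a).choose_spec
      rw [gray_injective k hk hspec, gray_add]
  · rintro x ⟨a, rfl⟩ y ⟨b, rfl⟩ z ⟨c, rfl⟩
    simp only [hm, add_assoc]
  · exact gray_zero' k hk
  · rintro x ⟨a, rfl⟩
    simp only [hm, add_zero, zero_add, and_self]
  · intro i
    have h2k : (2 * (k : ZMod (2 * k))) = 0 := by
      have h := ZMod.natCast_self (2 * k); push_cast at h; exact h
    have key : ((2 * k : ZMod (2 * k)) - i) = -i := by rw [h2k, zero_sub]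
    rw [key]
    constructor
    · rw [hm, add_neg_cancel]
    · rw [hm, neg_add_cancel]
end

section
/- Let φ: Z_{2k} → Z_2^k be defined by φ(i) = (0^{(k−i)} | 1^{(i)}) for 0 ≤ i ≤ k−1 and φ(i+k) = φ(i) + 1^{(k)}, with product φ(a)·φ(b) = φ(a) + σ_a(φ(b)), σ_a the a-fold left cyclic shift. Then φ: (Z_{2k}, +) → (φ(Z_{2k}), ·) is a group isomorphism, i.e., φ(i + j) = φ(i)·φ(j) for all i, j ∈ Z_{2k}. -/
lemma mod2k (k x : ℕ) (hk : 0 < k) (hx : x < 2*(2*k)) :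
    x % (2*k) = if x < 2*k then x else x - 2*k := by
  rcases Nat.lt_or_ge x (2*k) with h | h
  · rw [Nat.mod_eq_of_lt h, if_pos h]
  · rw [Nat.mod_eq_sub_mod h, Nat.mod_eq_of_lt (by omega), if_neg (by omega)]

lemma gray_eq (k : ℕ) (hk : 0 < k) (i : ZMod (2*k)) (j : Fin k) :
    gray k i j = if k ≤ (j.val + i.val) % (2*k) then 1 else 0 := by
  haveI : NeZero (2*k) := ⟨by omega⟩
  have hi : i.val < 2*k := ZMod.val_lt i
  have hj : j.val < k := j.isLt
  rw [mod2k k _ hk (by omega)]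
  unfold gray
  split_ifs <;> first | rfl | omega

lemma key (k m a b : ℕ) (hk : 0 < k) (hm : m < k) (ha : a < 2*k) (hb : b < 2*k) :
    (if k ≤ (m+a+b) % (2*k) then (1 : ZMod 2) else 0) =
      (if k ≤ (m+a) % (2*k) then 1 else 0) +
      (if k ≤ ((m+a) % k + b) % (2*k) then 1 else 0) := by
  rw [show m+a+b = (m+a)+b from rfl, ← Nat.mod_add_mod]
  have hs : (m+a) % (2*k) < 2*k := Nat.mod_lt _ (by omega)
  have hr : (m+a) % k < k := Nat.mod_lt _ hk
  have hrs : (m+a) % (2*k) % k = (m+a) % k := Nat.mod_mod_of_dvd _ ⟨2, by ring⟩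
  set s := (m+a) % (2*k) with hsdef
  set r := (m+a) % k with hrdef
  have hrs' : r = if s < k then s else s - k := by
    rw [← hrs]
    rcases Nat.lt_or_ge s k with h | h
    · rw [Nat.mod_eq_of_lt h, if_pos h]
    · rw [Nat.mod_eq_sub_mod h, Nat.mod_eq_of_lt (by omega), if_neg (by omega)]
  rw [mod2k k (s+b) hk (by omega), mod2k k (r+b) hk (by omega)]
  split_ifs at hrs' ⊢ <;> first | rfl | omega | decide

lemma nat_inj (k a a' : ℕ) (hk : 0 < k) (ha : a < 2*k) (ha' : a' < 2*k)
    (H : ∀ j, j < k → ((k ≤ (j+a) % (2*k)) ↔ (k ≤ (j+a') % (2*k)))) : a = a' := by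
  have H' : ∀ j, j < k → ((k ≤ j+a ∧ j+a < 2*k) ↔ (k ≤ j+a' ∧ j+a' < 2*k)) := by
    intro j hj
    have h1 := H j hj
    rw [mod2k k (j+a) hk (by omega), mod2k k (j+a') hk (by omega)] at h1
    split_ifs at h1 <;> omega
  have h0 := H' 0
  have h1 := H' (k - a)
  have h2 := H' (k - a')
  have h3 := H' (2*k - a)
  have h4 := H' (2*k - a')
  omega

theorem gray_group_isomorphism (k : ℕ) (hk : 0 < k) :
    Function.Injective (gray k) ∧
    ∀ i j : ZMod (2 * k),
      gray k (i + j) = gray k i + shiftA k hk i.val (gray k j) := by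
  haveI : NeZero (2*k) := ⟨by omega⟩
  constructor
  · intro i i' h
    have hi : i.val < 2*k := ZMod.val_lt i
    have hi' : i'.val < 2*k := ZMod.val_lt i'
    have hv : i.val = i'.val := by
      apply nat_inj k _ _ hk hi hi'
      intro j hj
      have := congrFun h ⟨j, hj⟩
      rw [gray_eq k hk i ⟨j, hj⟩, gray_eq k hk i' ⟨j, hj⟩] at this
      split_ifs at this with h1 h2 h2 <;> first | tauto | exact absurd this (by decide) | exact absurd this (by decide)
    exact ZMod.val_injective _ hv
  · intro i j
    funext m
    have hi : i.val < 2*k := ZMod.val_lt i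
    have hj : j.val < 2*k := ZMod.val_lt j
    have hm : m.val < k := m.isLt
    rw [gray_eq k hk (i+j) m]
    show _ = gray k i m + gray k j ⟨(m.val + i.val) % k, Nat.mod_lt _ hk⟩
    rw [gray_eq k hk i m, gray_eq k hk j ⟨(m.val + i.val) % k, Nat.mod_lt _ hk⟩]
    have hval : (i + j).val = (i.val + j.val) % (2*k) := ZMod.val_add i j
    rw [hval]
    show (if k ≤ (m.val + (i.val + j.val) % (2*k)) % (2*k) then (1:ZMod 2) else 0) = _
    rw [Nat.add_mod_mod, ← Nat.add_assoc]
    exact key k m.val i.val j.val hk hm hi hj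
end

section
/- For k > 2 and any additive subgroup C of Z_{2k}^n, the propelinear code Φ(C) is not translation invariant; specifically, with z = (1, 0, …, 0, 1) ∈ F_2^k (extended by zeros to length kn), d(0 ⋆ z, Φ(e_1) ⋆ z) = 3 ≠ 1 = d(0, Φ(e_1)) whenever both 0 and the element with first coordinate 1 are available. -/
/-- The coordinatewise extension `Φ : ZMod (2*k)^n → ZMod 2^(kn)` of the Gray map. -/
def grayExt (k n : ℕ) (c : Fin n → ZMod (2 * k)) : Fin n × Fin k → ZMod 2 :=
  fun p => gray k (c p.1) p.2

/-- The action of the permutation `π_x = (σ_{j_1} | ⋯ | σ_{j_n})` associated to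
`x = Φ(j_1, …, j_n)` on binary vectors of length `kn`. -/
def actExt (k : ℕ) (hk : 0 < k) (n : ℕ) (c : Fin n → ZMod (2 * k))
    (y : Fin n × Fin k → ZMod 2) : Fin n × Fin k → ZMod 2 :=
  fun p => y (p.1, ⟨(p.2.val + (c p.1).val) % k, Nat.mod_lt _ hk⟩)

/-- The vector z = (1,0,…,0,1) in F_2^k, extended by zeros to length kn. -/
def zvec (k n : ℕ) : Fin n × Fin k → ZMod 2 :=
  fun p => if p.1.val = 0 ∧ (p.2.val = 0 ∨ p.2.val = k - 1) then 1 else 0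

lemma ite_ne_ite_iff' (P Q : Prop) [Decidable P] [Decidable Q] :
    ((if P then (1 : ZMod 2) else 0) ≠ if Q then (1 : ZMod 2) else 0) ↔ (P ↔ ¬ Q) := by
  split_ifs with hp hq <;> simp_all

theorem grayExt_not_translation_invariant (k n : ℕ) (hk0 : 0 < k) (hk : 2 < k)
    (hn : 0 < n) (C : AddSubgroup (Fin n → ZMod (2 * k)))
    (e1 : Fin n → ZMod (2 * k))
    (he1def : e1 = fun i => if i.val = 0 then 1 else 0)
    (he1 : e1 ∈ C) :
    hammingDist
        (grayExt k n 0 + actExt k hk0 n 0 (zvec k n))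
        (grayExt k n e1 + actExt k hk0 n e1 (zvec k n)) = 3 ∧
    hammingDist (grayExt k n 0) (grayExt k n e1) = 1 ∧
    ¬ (∀ c ∈ C, ∀ c' ∈ C, ∀ u : Fin n × Fin k → ZMod 2,
        hammingDist (grayExt k n c) (grayExt k n c') =
          hammingDist (grayExt k n c + actExt k hk0 n c u)
            (grayExt k n c' + actExt k hk0 n c' u)) := by
  haveI : NeZero (2 * k) := ⟨by omega⟩
  have hval0 : (0 : ZMod (2 * k)).val = 0 := ZMod.val_zero
  have hval1 : (1 : ZMod (2 * k)).val = 1 := by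
    rw [ZMod.val_one_eq_one_mod]; exact Nat.mod_eq_of_lt (by omega)
  set i0 : Fin n := ⟨0, hn⟩
  set j0 : Fin k := ⟨0, hk0⟩
  set j1 : Fin k := ⟨k - 2, by omega⟩
  set j2 : Fin k := ⟨k - 1, by omega⟩
  -- pointwise values
  have hAval : ∀ (i : Fin n) (j : Fin k),
      (grayExt k n 0 + actExt k hk0 n 0 (zvec k n)) (i, j) =
        if i.val = 0 ∧ (j.val = 0 ∨ j.val = k - 1) then 1 else 0 := by
    intro i j
    have hj := j.isLt
    simp only [Pi.add_apply, grayExt, gray, actExt, zvec, Pi.zero_apply, hval0, Nat.add_zero,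
      Nat.mod_eq_of_lt hj]
    rw [if_pos hk0, if_neg (by omega), zero_add]
  have hBval : ∀ (i : Fin n) (j : Fin k),
      (grayExt k n e1 + actExt k hk0 n e1 (zvec k n)) (i, j) =
        if i.val = 0 ∧ j.val = k - 2 then 1 else 0 := by
    intro i j
    have hj := j.isLt
    subst he1def
    simp only [Pi.add_apply, grayExt, gray, actExt, zvec]
    by_cases hi : i.val = 0
    · simp only [hi, hval1, if_true, true_and, eq_self_iff_true]
      rw [if_pos (by omega : (1:ℕ) < k)]
      by_cases h1 : j.val = k - 1
      · rw [show (j.val + 1) % k = 0 by rw [show j.val + 1 = k by omega]; exact Nat.mod_self k]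
        rw [if_pos (by omega : k ≤ j.val + 1), if_pos (Or.inl rfl),
          if_neg (by omega : ¬ j.val = k - 2)]
        decide
      · by_cases h2 : j.val = k - 2
        · rw [show (j.val + 1) % k = k - 1 by
            rw [show j.val + 1 = k - 1 by omega]; exact Nat.mod_eq_of_lt (by omega)]
          rw [if_neg (by omega : ¬ k ≤ j.val + 1), if_pos (Or.inr rfl), if_pos h2]
          decide
        · rw [show (j.val + 1) % k = j.val + 1 from Nat.mod_eq_of_lt (by omega)]
          rw [if_neg (by omega : ¬ k ≤ j.val + 1),
            if_neg (by omega : ¬(j.val + 1 = 0 ∨ j.val + 1 = k - 1)),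
            if_neg (by omega : ¬ j.val = k - 2)]
          decide
    · simp only [if_neg hi, hval0, Nat.add_zero, Nat.mod_eq_of_lt hj]
      rw [if_pos hk0, if_neg (by omega : ¬ k ≤ j.val),
        if_neg (fun h => hi h.1), if_neg (fun h => hi h.1)]
      decide
  have h0val : ∀ (i : Fin n) (j : Fin k),
      grayExt k n 0 (i, j) = if j.val = k then 1 else 0 := by
    intro i j
    have hj := j.isLt
    simp only [grayExt, gray, Pi.zero_apply, hval0, Nat.add_zero]
    rw [if_pos hk0, if_neg (by omega : ¬ k ≤ j.val), if_neg (by omega : ¬ j.val = k)]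
  have hEval : ∀ (i : Fin n) (j : Fin k),
      grayExt k n e1 (i, j) = if i.val = 0 ∧ j.val = k - 1 then 1 else 0 := by
    intro i j
    have hj := j.isLt
    subst he1def
    simp only [grayExt, gray]
    by_cases hi : i.val = 0
    · simp only [hi, hval1, if_true, true_and, eq_self_iff_true]
      rw [if_pos (by omega : (1:ℕ) < k)]
      by_cases h1 : j.val = k - 1
      · rw [if_pos (by omega : k ≤ j.val + 1), if_pos h1]
      · rw [if_neg (by omega : ¬ k ≤ j.val + 1), if_neg h1]
    · simp only [if_neg hi, hval0, Nat.add_zero]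
      rw [if_pos hk0, if_neg (by omega : ¬ k ≤ j.val), if_neg (fun h => hi h.1)]
  have hd3 : hammingDist
      (grayExt k n 0 + actExt k hk0 n 0 (zvec k n))
      (grayExt k n e1 + actExt k hk0 n e1 (zvec k n)) = 3 := by
    have hfil : (Finset.univ.filter fun p : Fin n × Fin k =>
        (grayExt k n 0 + actExt k hk0 n 0 (zvec k n)) p ≠
        (grayExt k n e1 + actExt k hk0 n e1 (zvec k n)) p) =
        {(i0, j0), (i0, j1), (i0, j2)} := by
      ext ⟨i, j⟩
      have hj := j.isLt
      simp only [Finset.mem_filter, Finset.mem_univ, true_and, hAval, hBval,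
        ite_ne_ite_iff', Finset.mem_insert, Finset.mem_singleton, Prod.mk.injEq,
        Fin.ext_iff, i0, j0, j1, j2]
      omega
    unfold hammingDist
    rw [hfil, Finset.card_insert_of_notMem (by
        simp only [Finset.mem_insert, Finset.mem_singleton, Prod.mk.injEq, Fin.ext_iff,
          i0, j0, j1, j2]; omega),
      Finset.card_insert_of_notMem (by
        simp only [Finset.mem_singleton, Prod.mk.injEq, Fin.ext_iff, i0, j1, j2]; omega),
      Finset.card_singleton]
  have hd1 : hammingDist (grayExt k n 0) (grayExt k n e1) = 1 := by
    have hfil : (Finset.univ.filter fun p : Fin n × Fin k =>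
        grayExt k n 0 p ≠ grayExt k n e1 p) = {(i0, j2)} := by
      ext ⟨i, j⟩
      have hj := j.isLt
      simp only [Finset.mem_filter, Finset.mem_univ, true_and, h0val, hEval,
        ite_ne_ite_iff', Finset.mem_singleton, Prod.mk.injEq, Fin.ext_iff, i0, j2]
      omega
    unfold hammingDist
    rw [hfil, Finset.card_singleton]
  refine ⟨hd3, hd1, fun h => ?_⟩
  have := h 0 C.zero_mem e1 he1 (zvec k n)
  rw [hd1, hd3] at this
  omega
end

section
/- If (F_2^n, *) is a group with identity 0 and * is such that d(v, v*u) = wt(u) for all u, v ∈ F_2^n, then * satisfies the three distance-compatibility conditions: d(v, v*e) = 1 for all weight-one e; v*0 = v; and v*e = w*e implies v = w for weight-one e. Conversely, if (F_2^n, *) is a group and * is distance-compatible, then d(v, v*u) = wt(u) for all u, v. -/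
/-!
Condition (i) says that left multiplication by `v` sends the weight-one vectors injectively
into the Hamming sphere of radius one around `v`; both sets have the same size, so this is a
bijection, and every neighbour of `x` has the form `x * e` with `wt e = 1`. Hence
`y ↦ v * y` maps neighbours to neighbours, and so does its inverse `y ↦ v⁻¹ * y`. A map
preserving adjacency is 1-Lipschitz for the Hamming distance, so left multiplications are
isometries and `d(v, v * u) = d(v * 0, v * u) = d(0, u) = wt u`.
-/

open Finset Function

section Hamming

variable {ι β : Type*} [Fintype ι] [DecidableEq β]

theorem exists_hammingDist_eq_one_of_hammingDist_eq_succ {x y : ι → β} {k : ℕ}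
    (h : hammingDist x y = k + 1) : ∃ z, hammingDist x z = k ∧ hammingDist z y = 1 := by
  classical
  obtain ⟨i, hi⟩ : ∃ i, x i ≠ y i := by
    by_contra! hxy
    simp [funext hxy] at h
  refine ⟨update y i (x i), ?_, ?_⟩
  · have hsupp : ({j | x j ≠ update y i (x i) j} : Finset ι) =
        ({j | x j ≠ y j} : Finset ι).erase i := by
      ext j
      by_cases hj : j = i <;> simp [hj]
    rw [hammingDist, hsupp, card_erase_of_mem (by simpa using hi), ← hammingDist, h,
      Nat.add_sub_cancel]
  · have hsupp : ({j | update y i (x i) j ≠ y j} : Finset ι) = {i} := by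
      ext j
      by_cases hj : j = i <;> simp [hj, hi]
    rw [hammingDist, hsupp, card_singleton]

theorem hammingDist_apply_le_of_adjacent (f : (ι → β) → ι → β)
    (hf : ∀ x y, hammingDist x y = 1 → hammingDist (f x) (f y) ≤ 1) (x y : ι → β) :
    hammingDist (f x) (f y) ≤ hammingDist x y := by
  induction h : hammingDist x y generalizing y with
  | zero => simp [hammingDist_eq_zero.mp h]
  | succ k ih =>
    obtain ⟨z, hxz, hzy⟩ := exists_hammingDist_eq_one_of_hammingDist_eq_succ h
    calc hammingDist (f x) (f y) ≤ hammingDist (f x) (f z) + hammingDist (f z) (f y) :=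
          hammingDist_triangle _ _ _
      _ ≤ k + 1 := add_le_add (ih z hxz) (hf z y hzy)

variable [DecidableEq ι] [Fintype β] [AddGroup β]

theorem card_hammingDist_eq_one (v : ι → β) :
    #{w | hammingDist v w = 1} = #{e : ι → β | hammingNorm e = 1} := by
  refine (card_nbij' (fun e => v + e) (fun w => -v + w) ?_ ?_ ?_ ?_).symm <;>
    intro _ _ <;> simp_all [hammingDist_eq_hammingNorm]

theorem exists_hammingNorm_eq_one_of_hammingDist_eq_one {v w : ι → β}
    (g : (ι → β) → ι → β) (hg : Injective g)
    (hmaps : ∀ e, hammingNorm e = 1 → hammingDist v (g e) = 1) (hw : hammingDist v w = 1) :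
    ∃ e, hammingNorm e = 1 ∧ g e = w := by
  have hsurj := surjOn_of_injOn_of_card_le (s := {e | hammingNorm e = 1})
    (t := {w | hammingDist v w = 1}) g (by intro e he; simpa using hmaps e (by simpa using he))
    hg.injOn (card_hammingDist_eq_one v).le (by simpa using hw)
  simpa using hsurj

end Hamming

section LeftMultiplication

variable {ι β : Type*} [Fintype ι] [DecidableEq ι] [Fintype β] [DecidableEq β] [AddGroup β]
  (mul : (ι → β) → (ι → β) → ι → β)

theorem hammingDist_mul_mul_eq_one_of_hammingDist_eq_one
    (hassoc : ∀ a b c, mul (mul a b) c = mul a (mul b c))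
    (hleft : ∀ v, ∃ w, LeftInverse (mul w) (mul v))
    (hnbr : ∀ v e, hammingNorm e = 1 → hammingDist v (mul v e) = 1)
    (v : ι → β) {x y : ι → β} (hxy : hammingDist x y = 1) :
    hammingDist (mul v x) (mul v y) = 1 := by
  obtain ⟨w, hw⟩ := hleft x
  obtain ⟨e, he, rfl⟩ :=
    exists_hammingNorm_eq_one_of_hammingDist_eq_one (mul x) hw.injective (hnbr x) hxy
  rw [← hassoc]
  exact hnbr _ e he

theorem hammingDist_mul_mul
    (hassoc : ∀ a b c, mul (mul a b) c = mul a (mul b c))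
    (hleft : ∀ v, ∃ w, LeftInverse (mul w) (mul v))
    (hnbr : ∀ v e, hammingNorm e = 1 → hammingDist v (mul v e) = 1) (v x y : ι → β) :
    hammingDist (mul v x) (mul v y) = hammingDist x y := by
  have hlip (v x y : ι → β) : hammingDist (mul v x) (mul v y) ≤ hammingDist x y :=
    hammingDist_apply_le_of_adjacent (mul v) (fun x y hxy =>
      (hammingDist_mul_mul_eq_one_of_hammingDist_eq_one mul hassoc hleft hnbr v hxy).le) x y
  obtain ⟨w, hw⟩ := hleft v
  refine le_antisymm (hlip v x y) ?_
  calc hammingDist x y = hammingDist (mul w (mul v x)) (mul w (mul v y)) := by rw [hw x, hw y]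
    _ ≤ hammingDist (mul v x) (mul v y) := hlip w _ _

end LeftMultiplication

theorem distance_compatible_iff (n : ℕ)
    (mul : (Fin n → ZMod 2) → (Fin n → ZMod 2) → (Fin n → ZMod 2))
    (hassoc : ∀ a b c, mul (mul a b) c = mul a (mul b c))
    (hid : ∀ v, mul v 0 = v ∧ mul 0 v = v)
    (hinv : ∀ v, ∃ w, mul v w = 0 ∧ mul w v = 0) :
    ((∀ u v : Fin n → ZMod 2, hammingDist v (mul v u) = hammingNorm u) →
      ((∀ v e : Fin n → ZMod 2, hammingNorm e = 1 → hammingDist v (mul v e) = 1) ∧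
       (∀ v : Fin n → ZMod 2, mul v 0 = v ∧ mul 0 v = v) ∧
       (∀ v w e : Fin n → ZMod 2, hammingNorm e = 1 → mul v e = mul w e → v = w))) ∧
    (((∀ v e : Fin n → ZMod 2, hammingNorm e = 1 → hammingDist v (mul v e) = 1) ∧
      (∀ v : Fin n → ZMod 2, mul v 0 = v ∧ mul 0 v = v) ∧
      (∀ v w e : Fin n → ZMod 2, hammingNorm e = 1 → mul v e = mul w e → v = w)) →
      ∀ u v : Fin n → ZMod 2, hammingDist v (mul v u) = hammingNorm u) := by
  constructor
  · intro hwt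
    refine ⟨fun v e he => he ▸ hwt e v, hid, fun v w e _ hvw => ?_⟩
    obtain ⟨f, hef, -⟩ := hinv e
    calc v = mul (mul v e) f := by rw [hassoc, hef, (hid v).1]
      _ = w := by rw [hvw, hassoc, hef, (hid w).1]
  · rintro ⟨hnbr, -, -⟩ u v
    have hleft : ∀ v, ∃ w, LeftInverse (mul w) (mul v) := fun v =>
      let ⟨w, _, hwv⟩ := hinv v
      ⟨w, fun x => by rw [← hassoc, hwv, (hid x).2]⟩
    calc hammingDist v (mul v u) = hammingDist (mul v 0) (mul v u) := by rw [(hid v).1]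
      _ = hammingDist 0 u := hammingDist_mul_mul mul hassoc hleft hnbr v 0 u
      _ = hammingNorm u := congrFun hammingDist_zero_left u
end

section
/- Let φ: Z_{2k} → Z_2^m be a Gray map with Hamming-compatible induced operation φ(i)·φ(j) = φ(i+j). Then for each j with 1 ≤ j ≤ k, φ(j) is a sum of j distinct standard basis vectors e_{i_1} + ⋯ + e_{i_j} with {i_1, …, i_j} ⊆ {i_1, …, i_k} forming a nested chain, and φ(j + k) = φ(k) + φ(j); in particular wt(φ(j)) = j and wt(φ(j+k)) = k − j for 0 ≤ j ≤ k. -/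
open Finset

lemma zmod2_cases : ∀ a : ZMod 2, a = 0 ∨ a = 1 := by decide

lemma pi_add_self {m : ℕ} (x : Fin m → ZMod 2) : x + x = 0 := by
  funext i; simp [Pi.add_apply, CharTwo.add_self_eq_zero]

lemma dist_eq_norm_add {m : ℕ} (x y : Fin m → ZMod 2) :
    hammingDist x y = hammingNorm (x + y) := by
  rw [hammingDist_eq_hammingNorm]
  congr 1
  funext i
  simp [sub_eq_add_neg, CharTwo.neg_eq]

lemma exists_single {m : ℕ} (x : Fin m → ZMod 2) (h : hammingNorm x = 1) :
    ∃ i, x = Pi.single i 1 := by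
  unfold hammingNorm at h
  rw [Finset.card_eq_one] at h
  obtain ⟨i, hi⟩ := h
  have hmem : ∀ j, x j ≠ 0 ↔ j = i := by
    intro j
    constructor
    · intro hj
      have : j ∈ filter (fun t => x t ≠ 0) univ := by simpa using hj
      rw [hi] at this; simpa using this
    · intro hj
      have : j ∈ filter (fun t => x t ≠ 0) univ := by rw [hi, hj]; exact Finset.mem_singleton_self _
      simpa using this
  refine ⟨i, funext fun j => ?_⟩
  by_cases hj : j = i
  · subst hj
    have h1 : x j ≠ 0 := (hmem j).2 rfl
    rcases zmod2_cases (x j) with h | h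
    · exact absurd h h1
    · rw [h, Pi.single_eq_same]
  · have h0 : x j = 0 := by
      by_contra hne; exact hj ((hmem j).1 hne)
    rw [h0, Pi.single_eq_of_ne hj]

lemma norm_add_single_of_ne {m : ℕ} (x : Fin m → ZMod 2) (i : Fin m) (h : x i ≠ 0) :
    hammingNorm (x + Pi.single i 1) = hammingNorm x - 1 := by
  unfold hammingNorm
  have : filter (fun j => (x + Pi.single i 1 : Fin m → ZMod 2) j ≠ 0) univ
      = (filter (fun j => x j ≠ 0) univ).erase i := by
    ext j
    by_cases hj : j = i
    · subst hj
      have h1 : x j = 1 := by rcases zmod2_cases (x j) with h' | h'; exact absurd h' h; exact h'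
      simp [Pi.add_apply, Pi.single_eq_same, h1]; decide
    · simp [Pi.add_apply, Pi.single_eq_of_ne hj, hj]
  rw [this, Finset.card_erase_of_mem (by simpa using h)]

lemma norm_add_single_of_eq {m : ℕ} (x : Fin m → ZMod 2) (i : Fin m) (h : x i = 0) :
    hammingNorm (x + Pi.single i 1) = hammingNorm x + 1 := by
  unfold hammingNorm
  have : filter (fun j => (x + Pi.single i 1 : Fin m → ZMod 2) j ≠ 0) univ
      = insert i (filter (fun j => x j ≠ 0) univ) := by
    ext j
    by_cases hj : j = i
    · subst hj; simp [Pi.add_apply, Pi.single_eq_same, h]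
    · simp [Pi.add_apply, Pi.single_eq_of_ne hj, hj]
  rw [this, Finset.card_insert_of_notMem (by simp [h])]

lemma key_single_eq {m : ℕ} (z u v : Fin m → ZMod 2) (c : ℕ) (hc : 0 < c)
    (hz : hammingNorm z = c) (hu : hammingNorm u = 1) (hv : hammingNorm v = 1)
    (hzu : hammingNorm (z + u) = c - 1) (hzv : hammingNorm (z + v) = c - 1)
    (hzuv : hammingNorm (z + u + v) = c) : u = v := by
  obtain ⟨i, rfl⟩ := exists_single u hu
  obtain ⟨i', rfl⟩ := exists_single v hv
  have hzi : z i ≠ 0 := by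
    intro h0
    rw [norm_add_single_of_eq z i h0, hz] at hzu
    omega
  have hzi' : z i' ≠ 0 := by
    intro h0
    rw [norm_add_single_of_eq z i' h0, hz] at hzv
    omega
  by_cases hii : i = i'
  · rw [hii]
  · exfalso
    have h1 : (z + Pi.single i 1 : Fin m → ZMod 2) i' ≠ 0 := by
      have : (Pi.single i 1 : Fin m → ZMod 2) i' = 0 := Pi.single_eq_of_ne (Ne.symm hii) 1
      simpa [Pi.add_apply, this] using hzi'
    rw [norm_add_single_of_ne _ i' h1, hzu] at hzuv
    omega

lemma add_add_cancel_left {m : ℕ} (x y z : Fin m → ZMod 2) : (x + y) + (x + z) = y + z := by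
  rw [add_add_add_comm, pi_add_self, zero_add]

lemma add_add_cancel_mid {m : ℕ} (x y z : Fin m → ZMod 2) : (y + x) + (x + z) = y + z := by
  rw [add_assoc, ← add_assoc x x z, pi_add_self, zero_add]

lemma pi_eq_of_add_eq {m : ℕ} {x y z : Fin m → ZMod 2} (h : x + y = z) : x = z + y := by
  rw [← h, add_assoc, pi_add_self, add_zero]

lemma pi_eq_of_add_eq_zero {m : ℕ} {x y : Fin m → ZMod 2} (h : x + y = 0) : x = y := by
  have := pi_eq_of_add_eq h; rwa [zero_add] at this

lemma swap_pairs {m : ℕ} {a b c d : Fin m → ZMod 2} (h : a + b = c + d) : d + b = c + a := by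
  apply pi_eq_of_add_eq_zero
  have e : (d + b) + (c + a) = (a + b) + (c + d) := by abel
  rw [e, h]
  exact pi_add_self _

theorem gray_nested_chain (k m : ℕ) (hk : 0 < k)
    (φ : ZMod (2 * k) → Fin m → ZMod 2)
    (hinj : Function.Injective φ)
    (hgray : ∀ i : ZMod (2 * k), hammingDist (φ i) (φ (i + 1)) = 1)
    (hHC : ∀ a b : ZMod (2 * k), hammingDist (φ a) (φ (a + b)) = hammingNorm (φ b)) :
    ∃ e : Fin k → Fin m, Function.Injective e ∧
      (∀ j : ℕ, j ≤ k →
        φ (j : ZMod (2 * k)) =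
          ∑ s ∈ Finset.univ.filter (fun s : Fin k => s.val < j),
            Pi.single (e s) (1 : ZMod 2)) ∧
      (∀ j : ℕ, j ≤ k →
        φ ((j : ZMod (2 * k)) + (k : ZMod (2 * k))) =
          φ (k : ZMod (2 * k)) + φ (j : ZMod (2 * k))) ∧
      (∀ j : ℕ, j ≤ k →
        hammingNorm (φ (j : ZMod (2 * k))) = j ∧
        hammingNorm (φ ((j : ZMod (2 * k)) + (k : ZMod (2 * k)))) = k - j) := by
  haveI : NeZero (2 * k) := ⟨by omega⟩
  have hφ0 : φ 0 = 0 := by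
    have h := hHC 0 0
    rw [add_zero, hammingDist_self] at h
    exact hammingNorm_eq_zero.mp h.symm
  have hcast : ∀ j : ℕ, ((j : ZMod (2*k)) + 1) = ((j+1 : ℕ) : ZMod (2*k)) := by
    intro j; push_cast; ring
  have hstep : ∀ j : ℕ,
      hammingDist (φ (j : ZMod (2*k))) (φ ((j+1 : ℕ) : ZMod (2*k))) = 1 := by
    intro j
    have := hgray (j : ZMod (2*k))
    rwa [hcast j] at this
  have hw_le : ∀ j : ℕ, hammingNorm (φ (j : ZMod (2*k))) ≤ j := by
    intro j
    induction j with
    | zero => simp [hφ0]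
    | succ n ih =>
      have h1 := hstep n
      calc hammingNorm (φ ((n+1:ℕ):ZMod (2*k)))
          = hammingDist (φ ((n+1:ℕ):ZMod (2*k))) 0 := (hammingDist_zero_right _).symm
        _ ≤ hammingDist (φ ((n+1:ℕ):ZMod (2*k))) (φ (n:ZMod (2*k)))
            + hammingDist (φ (n:ZMod (2*k))) 0 := hammingDist_triangle _ _ _
        _ = 1 + hammingNorm (φ (n:ZMod (2*k))) := by
            rw [hammingDist_comm, h1, hammingDist_zero_right]
        _ ≤ 1 + n := Nat.add_le_add_left ih 1
        _ = n + 1 := by omega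
  -- the hard step
  have hwk : hammingNorm (φ (k : ZMod (2*k))) = k := by
    by_contra hne
    have hPk : hammingNorm (φ (k : ZMod (2*k))) < k := lt_of_le_of_ne (hw_le k) hne
    have hex : ∃ b : ℕ, hammingNorm (φ (b : ZMod (2*k))) < b := ⟨k, hPk⟩
    classical
    obtain ⟨b, hb, hbk, hmin0⟩ :
        ∃ b : ℕ, hammingNorm (φ (b : ZMod (2*k))) < b ∧ b ≤ k ∧
          ∀ j, j < b → ¬(hammingNorm (φ (j : ZMod (2*k))) < j) :=
      ⟨Nat.find hex, Nat.find_spec hex, Nat.find_min' hex hPk,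
        fun j hj => Nat.find_min hex hj⟩
    have hmin : ∀ j, j < b → hammingNorm (φ (j : ZMod (2*k))) = j := by
      intro j hj
      have h1 := hmin0 j hj
      have h2 := hw_le j
      omega
    have hb1 : 1 ≤ b := by omega
    set p := b - 1 with hpdef
    have hbp : b = p + 1 := by omega
    have hwp : hammingNorm (φ (p : ZMod (2*k))) = p := hmin p (by omega)
    have hp1 : 1 ≤ p := by
      by_contra h
      have hp0 : p = 0 := by omega
      have hb1' : b = 1 := by omega
      have : hammingNorm (φ ((1:ℕ) : ZMod (2*k))) = 0 := by
        have := hb; rw [hb1'] at this; omega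
      have h10 : φ ((1:ℕ) : ZMod (2*k)) = 0 := hammingNorm_eq_zero.mp this
      have : ((1:ℕ) : ZMod (2*k)) = 0 := hinj (by rw [h10, hφ0])
      rw [ZMod.natCast_eq_zero_iff] at this
      have := Nat.le_of_dvd one_pos this
      omega
    -- w b = p - 1
    have hwb : hammingNorm (φ (b : ZMod (2*k))) = p - 1 := by
      have h1 := hstep p
      rw [dist_eq_norm_add] at h1
      obtain ⟨i, hi⟩ := exists_single _ h1
      have hφb : φ (b : ZMod (2*k)) = φ (p : ZMod (2*k)) + Pi.single i 1 := by
        rw [hbp]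
        have hi' : φ ((p+1:ℕ) : ZMod (2*k)) + φ (p : ZMod (2*k)) = Pi.single i 1 :=
          (add_comm (φ (p : ZMod (2*k))) (φ ((p+1:ℕ) : ZMod (2*k)))) ▸ hi
        have h2 := pi_eq_of_add_eq hi'
        rwa [add_comm (Pi.single i 1)] at h2
      by_cases hzi : φ (p : ZMod (2*k)) i = 0
      · rw [hφb, norm_add_single_of_eq _ _ hzi, hwp] at hb ⊢
        omega
      · rw [hφb, norm_add_single_of_ne _ _ hzi, hwp]
    -- periodicity of increments with period p
    have hPsplit : ∀ a : ZMod (2*k),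
        a + ((p:ℕ) : ZMod (2*k)) = (a + 1) + ((p-1:ℕ) : ZMod (2*k)) := by
      intro a
      have h : ((p-1:ℕ) : ZMod (2*k)) + 1 = ((p:ℕ) : ZMod (2*k)) := by
        rw [hcast]; congr 1; omega
      rw [← h]; ring
    have hBsplit : ∀ a : ZMod (2*k),
        a + ((p:ℕ) : ZMod (2*k)) + 1 = a + ((b:ℕ) : ZMod (2*k)) := by
      intro a; rw [hbp]; push_cast; ring
    have hwp1 : hammingNorm (φ ((p-1:ℕ) : ZMod (2*k))) = p - 1 := hmin _ (by omega)
    have hper : ∀ a : ZMod (2*k),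
        φ a + φ (a+1) = φ (a + ((p:ℕ) : ZMod (2*k))) + φ (a + ((p:ℕ) : ZMod (2*k)) + 1) := by
      intro a
      have hBsplit2 : ∀ a' : ZMod (2*k),
          a' + ((b:ℕ) : ZMod (2*k)) = (a' + 1) + ((p:ℕ) : ZMod (2*k)) := by
        intro a'; rw [hbp]; push_cast; ring
      apply key_single_eq (φ a + φ (a + ((p:ℕ) : ZMod (2*k)))) _ _ p hp1
      · rw [← dist_eq_norm_add]
        exact (hHC a ((p:ℕ) : ZMod (2*k))).trans hwp
      · rw [← dist_eq_norm_add]; exact hgray a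
      · rw [← dist_eq_norm_add]; exact hgray (a + ((p:ℕ) : ZMod (2*k)))
      · rw [add_add_cancel_left, add_comm (φ (a + ((p:ℕ) : ZMod (2*k)))) (φ (a+1)), ← dist_eq_norm_add,
          hPsplit a]
        exact (hHC (a+1) _).trans hwp1
      · rw [add_add_cancel_mid, ← dist_eq_norm_add, hBsplit a]
        exact (hHC a _).trans hwb
      · rw [add_add_cancel_left, add_add_cancel_left, ← dist_eq_norm_add, hBsplit a,
          hBsplit2 a]
        exact (hHC (a+1) _).trans hwp
    -- g is constant
    have hconst : ∀ n : ℕ,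
        φ ((n : ZMod (2*k)) + ((p:ℕ) : ZMod (2*k))) + φ (n : ZMod (2*k))
          = φ ((p:ℕ) : ZMod (2*k)) := by
      intro n
      induction n with
      | zero => simp [hφ0]
      | succ n ih =>
        rw [← hcast n]
        have e : ((n : ZMod (2*k)) + 1) + ((p:ℕ) : ZMod (2*k))
            = (n : ZMod (2*k)) + ((p:ℕ) : ZMod (2*k)) + 1 := by ring
        rw [e]
        exact (swap_pairs (hper (n : ZMod (2*k)))).trans ih
    have h2p : φ (((p+p : ℕ)) : ZMod (2*k)) = φ 0 := by
      have hc := hconst p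
      have h3 := pi_eq_of_add_eq hc
      rw [pi_add_self] at h3
      rw [hφ0]
      push_cast
      exact h3
    have h4 : ((p+p : ℕ) : ZMod (2*k)) = 0 := hinj h2p
    rw [ZMod.natCast_eq_zero_iff] at h4
    have h5 := Nat.le_of_dvd (by omega) h4
    omega
  -- exact weights
  have hwj : ∀ j : ℕ, j ≤ k → hammingNorm (φ (j : ZMod (2*k))) = j := by
    intro j hj
    refine le_antisymm (hw_le j) ?_
    have hsplit : (j : ZMod (2*k)) + ((k-j:ℕ) : ZMod (2*k)) = (k : ZMod (2*k)) := by
      rw [← Nat.cast_add]; congr 1; omega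
    have h1 : hammingDist (φ (j : ZMod (2*k))) (φ (k : ZMod (2*k)))
        = hammingNorm (φ ((k-j:ℕ) : ZMod (2*k))) := by
      have := hHC (j : ZMod (2*k)) ((k-j:ℕ) : ZMod (2*k))
      rwa [hsplit] at this
    have h2 : hammingNorm (φ ((k-j:ℕ) : ZMod (2*k))) ≤ k - j := hw_le _
    have h3 : hammingNorm (φ (k : ZMod (2*k)))
        ≤ hammingDist (φ (k : ZMod (2*k))) (φ (j : ZMod (2*k)))
          + hammingNorm (φ (j : ZMod (2*k))) := by
      calc hammingNorm (φ (k : ZMod (2*k)))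
          = hammingDist (φ (k : ZMod (2*k))) 0 := (hammingDist_zero_right _).symm
        _ ≤ hammingDist (φ (k : ZMod (2*k))) (φ (j : ZMod (2*k)))
            + hammingDist (φ (j : ZMod (2*k))) 0 := hammingDist_triangle _ _ _
        _ = hammingDist (φ (k : ZMod (2*k))) (φ (j : ZMod (2*k)))
            + hammingNorm (φ (j : ZMod (2*k))) := by rw [hammingDist_zero_right]
    rw [hwk, hammingDist_comm, h1] at h3
    omega
  have hwk2 : ∀ j : ℕ, j ≤ k →
      hammingNorm (φ ((j : ZMod (2*k)) + (k : ZMod (2*k)))) = k - j := by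
    intro j hj
    have hsplit : ((j : ZMod (2*k)) + (k : ZMod (2*k))) + ((k-j:ℕ) : ZMod (2*k)) = 0 := by
      rw [show (j : ZMod (2*k)) + (k : ZMod (2*k)) = ((j+k:ℕ) : ZMod (2*k)) by push_cast; ring,
        ← Nat.cast_add, show j+k+(k-j) = 2*k by omega, ZMod.natCast_self]
    have h1 := hHC ((j : ZMod (2*k)) + (k : ZMod (2*k))) ((k-j:ℕ) : ZMod (2*k))
    rw [hsplit, hφ0, hammingDist_zero_right, hwj (k-j) (by omega)] at h1
    exact h1
  -- increments
  classical
  have hδ1 : ∀ t : ℕ,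
      hammingNorm (φ (t : ZMod (2*k)) + φ ((t+1:ℕ) : ZMod (2*k))) = 1 := by
    intro t; rw [← dist_eq_norm_add]; exact hstep t
  choose e' he' using fun t : ℕ => exists_single _ (hδ1 t)
  -- sum formula
  have hsum : ∀ j : ℕ, j ≤ k → φ (j : ZMod (2*k)) =
      ∑ s ∈ Finset.univ.filter (fun s : Fin k => s.val < j),
        Pi.single (e' s.val) (1 : ZMod 2) := by
    intro j
    induction j with
    | zero => intro _; simp [hφ0]
    | succ n ih =>
      intro hn1
      have hn : n < k := by omega
      have hfil : Finset.univ.filter (fun s : Fin k => s.val < n+1)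
          = insert (⟨n, hn⟩ : Fin k)
              (Finset.univ.filter (fun s : Fin k => s.val < n)) := by
        ext s
        simp only [Finset.mem_filter, Finset.mem_insert, Finset.mem_univ, true_and,
          Fin.ext_iff]
        omega
      rw [hfil, Finset.sum_insert (by simp), ← ih (by omega)]
      have h := he' n
      have h2 : φ ((n+1:ℕ) : ZMod (2*k)) + φ (n : ZMod (2*k)) = Pi.single (e' n) 1 :=
        (add_comm (φ (n : ZMod (2*k))) (φ ((n+1:ℕ) : ZMod (2*k)))) ▸ h
      exact pi_eq_of_add_eq h2
  -- injectivity
  have hek : φ (k : ZMod (2*k)) = ∑ s : Fin k, Pi.single (e' s.val) (1 : ZMod 2) := by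
    have h := hsum k le_rfl
    rwa [Finset.filter_true_of_mem (fun s _ => s.isLt)] at h
  have hinj_e : Function.Injective (fun s : Fin k => e' s.val) := by
    have hsupp : Finset.univ.filter
        (fun i : Fin m =>
          ((∑ s : Fin k, Pi.single (e' s.val) (1 : ZMod 2) : Fin m → ZMod 2)) i ≠ 0)
        ⊆ Finset.univ.image (fun s : Fin k => e' s.val) := by
      intro i hi
      simp only [Finset.mem_filter, Finset.mem_univ, true_and] at hi
      by_contra hni
      simp only [Finset.mem_image, Finset.mem_univ, true_and] at hni
      push_neg at hni
      apply hi
      have hz0 : ∀ s : Fin k, (Pi.single (e' s.val) (1:ZMod 2) : Fin m → ZMod 2) i = 0 :=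
        fun s => Pi.single_eq_of_ne (Ne.symm (hni s)) 1
      calc ((∑ s : Fin k, Pi.single (e' s.val) (1 : ZMod 2) : Fin m → ZMod 2)) i
          = ∑ s : Fin k, (Pi.single (e' s.val) (1:ZMod 2) : Fin m → ZMod 2) i :=
            Finset.sum_apply i _ _
        _ = 0 := Finset.sum_eq_zero fun s _ => hz0 s
    have hnormk : hammingNorm ((∑ s : Fin k, Pi.single (e' s.val) (1 : ZMod 2) : Fin m → ZMod 2)) = k := by
      rw [← hek]; exact hwk
    have hcard : k ≤ (Finset.univ.image (fun s : Fin k => e' s.val)).card := by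
      calc k = hammingNorm ((∑ s : Fin k, Pi.single (e' s.val) (1 : ZMod 2) : Fin m → ZMod 2)) := hnormk.symm
        _ ≤ _ := Finset.card_le_card hsupp
    have h1 : (Finset.univ.image (fun s : Fin k => e' s.val)).card
        = (Finset.univ : Finset (Fin k)).card := by
      refine le_antisymm Finset.card_image_le ?_
      simpa using hcard
    have h2 := Finset.card_image_iff.mp h1
    rw [Finset.coe_univ] at h2
    exact Set.injOn_univ.mp h2
  -- part 2: periodicity with period k
  have hKsplit : ∀ a : ZMod (2*k),
      a + ((k:ℕ) : ZMod (2*k)) = (a + 1) + ((k-1:ℕ) : ZMod (2*k)) := by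
    intro a
    have h : ((k-1:ℕ) : ZMod (2*k)) + 1 = ((k:ℕ) : ZMod (2*k)) := by
      rw [hcast]; congr 1; omega
    rw [← h]; ring
  have hKsplit1 : ∀ a : ZMod (2*k),
      a + ((k:ℕ) : ZMod (2*k)) + 1 = a + ((k+1:ℕ) : ZMod (2*k)) := by
    intro a; push_cast; ring
  have hKsplit2 : ∀ a : ZMod (2*k),
      a + ((k+1:ℕ) : ZMod (2*k)) = (a + 1) + ((k:ℕ) : ZMod (2*k)) := by
    intro a; push_cast; ring
  have hwkm1 : hammingNorm (φ ((k-1:ℕ) : ZMod (2*k))) = k - 1 := hwj (k-1) (by omega)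
  have hwk1 : hammingNorm (φ ((k+1:ℕ) : ZMod (2*k))) = k - 1 := by
    have h := hwk2 1 hk
    rwa [show ((1:ℕ) : ZMod (2*k)) + ((k:ℕ) : ZMod (2*k)) = ((k+1:ℕ) : ZMod (2*k)) by
      push_cast; ring] at h
  have hperk : ∀ a : ZMod (2*k),
      φ a + φ (a+1) = φ (a + ((k:ℕ) : ZMod (2*k))) + φ (a + ((k:ℕ) : ZMod (2*k)) + 1) := by
    intro a
    apply key_single_eq (φ a + φ (a + ((k:ℕ) : ZMod (2*k)))) _ _ k hk
    · rw [← dist_eq_norm_add]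
      exact (hHC a ((k:ℕ) : ZMod (2*k))).trans hwk
    · rw [← dist_eq_norm_add]; exact hgray a
    · rw [← dist_eq_norm_add]; exact hgray (a + ((k:ℕ) : ZMod (2*k)))
    · rw [add_add_cancel_left,
        add_comm (φ (a + ((k:ℕ) : ZMod (2*k)))) (φ (a+1)), ← dist_eq_norm_add, hKsplit a]
      exact (hHC (a+1) _).trans hwkm1
    · rw [add_add_cancel_mid, ← dist_eq_norm_add, hKsplit1 a]
      exact (hHC a _).trans hwk1
    · rw [add_add_cancel_left, add_add_cancel_left, ← dist_eq_norm_add, hKsplit1 a,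
        hKsplit2 a]
      exact (hHC (a+1) _).trans hwk
  have hconstk : ∀ n : ℕ,
      φ ((n : ZMod (2*k)) + ((k:ℕ) : ZMod (2*k))) + φ (n : ZMod (2*k))
        = φ ((k:ℕ) : ZMod (2*k)) := by
    intro n
    induction n with
    | zero => simp [hφ0]
    | succ n ih =>
      rw [← hcast n]
      have e : ((n : ZMod (2*k)) + 1) + ((k:ℕ) : ZMod (2*k))
          = (n : ZMod (2*k)) + ((k:ℕ) : ZMod (2*k)) + 1 := by ring
      rw [e]
      exact (swap_pairs (hperk (n : ZMod (2*k)))).trans ih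
  refine ⟨fun s => e' s.val, hinj_e, hsum,
    fun j _ => pi_eq_of_add_eq (hconstk j), fun j hj => ⟨hwj j hj, hwk2 j hj⟩⟩
end
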